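/- Fix α ∈ ℂ. The image of the derivation algebra of A_α under the matrix exponential equals the automorphism group of A_α: for every automorphism σ of the ω-Lie algebra A_α there exists a derivation d of A_α with exp(d) = σ, and conversely exp(d) is an automorphism of A_α for every derivation d of A_α. (Here derivations and automorphisms are identified with their 3×3 complex matrices relative to the basis x, y, z, and exp denotes the matrix exponential.) -/

import Mathlib

/-!
The bracket of `A_α` is determined by skew-symmetry and its values on the basis, so everything
can be computed in coordinates. On the pairs `(x, y), (x, z), (y, z)` the derivation condition
is a linear system whose solutions are the nilpotent matrices `derMat t`. The automorphism
condition is a quadratic system: a combination of its equations kills the lower 2×2 minor,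
which forces an automorphism to be upper triangular, and then to be the unipotent matrix
`autMat t`. Since `(derMat t)³ = 0`, `exp (derMat t) = 1 + derMat t + (derMat t)² / 2 = autMat t`,
so `exp` maps the one family onto the other.
-/

noncomputable section

/-- The underlying space ℂ³ of the ω-Lie algebra A_α. -/
abbrev V3 : Type := Fin 3 → ℂ

/-- The basis vector x = e₁. -/
def vx : V3 := ![1, 0, 0]

/-- The basis vector y = e₂. -/
def vy : V3 := ![0, 1, 0]

/-- The basis vector z = e₃. -/
def vz : V3 := ![0, 0, 1]

/-- A 3×3 complex matrix is (identified with) a derivation of the bracket `b`. -/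
def IsDerMat (b : V3 →ₗ[ℂ] V3 →ₗ[ℂ] V3) (A : Matrix (Fin 3) (Fin 3) ℂ) : Prop :=
  ∀ u v : V3,
    Matrix.toLin' A (b u v) = b (Matrix.toLin' A u) v + b u (Matrix.toLin' A v)

/-- A 3×3 complex matrix is (identified with) an automorphism of the bracket `b`. -/
def IsAutMat (b : V3 →ₗ[ℂ] V3 →ₗ[ℂ] V3) (A : Matrix (Fin 3) (Fin 3) ℂ) : Prop :=
  Function.Bijective (Matrix.toLin' A) ∧
    ∀ u v : V3, Matrix.toLin' A (b u v) = b (Matrix.toLin' A u) (Matrix.toLin' A v)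

open Matrix

theorem NormedSpace.exp_eq_isNilpotent_exp {𝔸 : Type*} [Ring 𝔸] [Algebra ℚ 𝔸]
    [TopologicalSpace 𝔸] [IsTopologicalRing 𝔸] {a : 𝔸} (h : IsNilpotent a) :
    NormedSpace.exp a = IsNilpotent.exp a := by
  obtain ⟨n, hn⟩ := h
  rw [exp_eq_tsum_rat, IsNilpotent.exp_eq_sum hn]
  exact tsum_eq_sum fun i hi => by
    rw [pow_eq_zero_of_le (by simpa using hi) hn, smul_zero]

theorem Matrix.bijective_toLin'_of_isUnit {n R : Type*} [Fintype n] [DecidableEq n] [CommRing R]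
    {M : Matrix n n R} (h : IsUnit M) : Function.Bijective (toLin' M) :=
  (Module.End.isUnit_iff _).1 (h.map toLinAlgEquiv')

theorem Fin.forall_fin_three {p : Fin 3 → Prop} : (∀ i, p i) ↔ p 0 ∧ p 1 ∧ p 2 := by
  simp [Fin.forall_fin_succ]

def bracketA (α : ℂ) : V3 →ₗ[ℂ] V3 →ₗ[ℂ] V3 :=
  LinearMap.mk₂ ℂ
    (fun u v => ![u 0 * v 1 - u 1 * v 0 + (u 0 * v 2 - u 2 * v 0) + α * (u 1 * v 2 - u 2 * v 1),
      u 0 * v 2 - u 2 * v 0, u 1 * v 2 - u 2 * v 1])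
    (fun _ _ _ => by ext i; fin_cases i <;> simp <;> ring)
    (fun _ _ _ => by ext i; fin_cases i <;> simp <;> ring)
    (fun _ _ _ => by ext i; fin_cases i <;> simp <;> ring)
    (fun _ _ _ => by ext i; fin_cases i <;> simp <;> ring)

lemma coe_basisFun_eq_vx_vy_vz : ⇑(Pi.basisFun ℂ (Fin 3)) = ![vx, vy, vz] := by
  ext i j
  fin_cases i <;> fin_cases j <;> simp [vx, vy, vz]

lemma eq_bracketA (α : ℂ) (b : V3 →ₗ[ℂ] V3 →ₗ[ℂ] V3)
    (hskew : ∀ u v : V3, b u v = - b v u)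
    (hxy : b vx vy = vx) (hxz : b vx vz = vx + vy) (hyz : b vy vz = vz + α • vx) :
    b = bracketA α := by
  have hdiag (w : V3) : b w w = 0 := by
    linear_combination (norm := module) (1 / 2 : ℂ) • hskew w w
  refine LinearMap.ext_basis (Pi.basisFun ℂ (Fin 3)) (Pi.basisFun ℂ (Fin 3)) fun i j => ?_
  rw [coe_basisFun_eq_vx_vy_vz]
  fin_cases i <;> fin_cases j <;>
    simp only [Fin.zero_eta, Fin.mk_one, Fin.reduceFinMk, cons_val, hdiag, hxy, hxz, hyz,
      hskew vy vx, hskew vz vx, hskew vz vy] <;>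
    ext k <;> fin_cases k <;> simp [bracketA, vx, vy, vz]

def derMat (t : ℂ) : Matrix (Fin 3) (Fin 3) ℂ := !![0, 2 * t, t; 0, 0, 2 * t; 0, 0, 0]

def autMat (t : ℂ) : Matrix (Fin 3) (Fin 3) ℂ :=
  !![1, 2 * t, 2 * t ^ 2 + t; 0, 1, 2 * t; 0, 0, 1]

lemma derMat_pow_three (t : ℂ) : derMat t ^ 3 = 0 := by
  simp only [derMat, pow_succ, pow_zero, one_mul, mul_fin_three]
  ext i j
  fin_cases i <;> fin_cases j <;> simp

lemma exp_derMat (t : ℂ) : NormedSpace.exp (derMat t) = autMat t := by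
  rw [NormedSpace.exp_eq_isNilpotent_exp ⟨3, derMat_pow_three t⟩,
    IsNilpotent.exp_eq_sum (derMat_pow_three t)]
  ext i j
  fin_cases i <;> fin_cases j <;> simp [Finset.sum_range_succ, derMat, autMat, sq, Rat.smul_def]
  ring

lemma isUnit_autMat (t : ℂ) : IsUnit (autMat t) := by
  simp [isUnit_iff_isUnit_det, autMat, det_fin_three]

lemma eq_derMat_of_isDerMat {α : ℂ} {A : Matrix (Fin 3) (Fin 3) ℂ}
    (hA : IsDerMat (bracketA α) A) : A = derMat (A 0 2) := by
  have hxy := hA vx vy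
  have hxz := hA vx vz
  have hyz := hA vy vz
  simp only [funext_iff, Fin.forall_fin_three, bracketA, LinearMap.mk₂_apply, toLin'_apply,
    mulVec, dotProduct, Fin.sum_univ_three, vx, vy, vz, cons_val, Pi.add_apply] at hxy hxz hyz
  obtain ⟨hxy₀, hxy₁, hxy₂⟩ := hxy
  obtain ⟨hxz₀, hxz₁, hxz₂⟩ := hxz
  obtain ⟨hyz₀, hyz₁, hyz₂⟩ := hyz
  have h20 : A 2 0 = 0 := by linear_combination (1 / 2 : ℂ) * hxy₂
  have h11 : A 1 1 = 0 := by linear_combination -hyz₂ + α * h20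
  have h21 : A 2 1 = 0 := by linear_combination -hxy₀ - h11 + α * h20
  have h10 : A 1 0 = 0 := by linear_combination hxy₁ + h21
  have h12 : A 1 2 = A 0 1 := by linear_combination hyz₁ - α * h10
  have h22 : A 2 2 = 0 := by linear_combination -hxz₀ - α * h10 - h12
  have h00 : A 0 0 = 0 := by linear_combination -hxz₁ + h10 + h11 - h22
  have h01 : A 0 1 = 2 * A 0 2 := by linear_combination -hyz₀ + α * h00 - α * h11 - α * h22
  ext i j
  fin_cases i <;> fin_cases j <;> simp [derMat, h00, h01, h10, h11, h12, h20, h21, h22]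

lemma eq_zero_below_diag_of_map_bracketA {α : ℂ} {B : Matrix (Fin 3) (Fin 3) ℂ}
    (hB : ∀ u v, toLin' B (bracketA α u v) = bracketA α (toLin' B u) (toLin' B v)) :
    B 1 0 = 0 ∧ B 2 0 = 0 ∧ B 2 1 = 0 := by
  have hxy := hB vx vy
  have hxz := hB vx vz
  simp only [funext_iff, Fin.forall_fin_three, bracketA, LinearMap.mk₂_apply, toLin'_apply,
    mulVec, dotProduct, Fin.sum_univ_three, vx, vy, vz, cons_val] at hxy hxz
  obtain ⟨hxy₀, hxy₁, hxy₂⟩ := hxy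
  obtain ⟨hxz₀, hxz₁, hxz₂⟩ := hxz
  have hminor : B 1 0 * B 2 1 - B 2 0 * B 1 1 = 0 := by
    linear_combination (B 1 0 + B 1 1) * hxy₁ - (B 0 0 + B 0 1) * hxy₂
      - (B 2 0 + B 2 1) * (hxy₀ - hxy₁ - α * hxy₂) - B 1 0 * hxz₁ + B 0 0 * hxz₂
      + B 2 0 * (hxz₀ - hxz₁ - α * hxz₂)
  have h20 : B 2 0 = 0 := by linear_combination hxy₂ + hminor
  have h10 : B 1 0 = 0 := by
    refine mul_self_eq_zero.mp ?_
    linear_combination B 1 0 * hxy₁ + B 0 0 * hminor + (B 0 0 * B 1 1 - B 1 0 * B 0 1) * h20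
  have h21 : B 2 1 = 0 := by linear_combination hxz₂ - (1 + B 1 2) * h20 + B 2 2 * h10
  exact ⟨h10, h20, h21⟩

lemma eq_autMat_of_isAutMat {α : ℂ} {B : Matrix (Fin 3) (Fin 3) ℂ}
    (hB : IsAutMat (bracketA α) B) : B = autMat (B 0 1 / 2) := by
  obtain ⟨h10, h20, h21⟩ := eq_zero_below_diag_of_map_bracketA hB.2
  have h00_ne : B 0 0 ≠ 0 := by
    intro h00
    have hvx : toLin' B vx = toLin' B 0 := by
      ext i; fin_cases i <;> simp [vx, mulVec, dotProduct, Fin.sum_univ_three, h00, h10, h20]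
    simpa [vx] using congrFun (hB.1.1 hvx) 0
  have hxy := hB.2 vx vy
  have hxz := hB.2 vx vz
  have hyz := hB.2 vy vz
  simp only [funext_iff, Fin.forall_fin_three, bracketA, LinearMap.mk₂_apply, toLin'_apply,
    mulVec, dotProduct, Fin.sum_univ_three, vx, vy, vz, cons_val, h10, h20, h21] at hxy hxz hyz
  obtain ⟨hxy₀, -, -⟩ := hxy
  obtain ⟨hxz₀, hxz₁, -⟩ := hxz
  obtain ⟨hyz₀, hyz₁, -⟩ := hyz
  have h11 : B 1 1 = 1 := mul_left_cancel₀ h00_ne (by linear_combination -hxy₀)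
  have h00_mul_22 : B 0 0 * B 2 2 = 1 := by linear_combination h11 - hxz₁
  have h00 : B 0 0 = 1 := by linear_combination hxz₀ + B 0 0 * hyz₁ + (1 + B 0 1) * h00_mul_22
  have h22 : B 2 2 = 1 := by linear_combination h00_mul_22 - B 2 2 * h00
  have h12 : B 1 2 = B 0 1 := by linear_combination hyz₁ + B 0 1 * h22
  have h02 : B 0 2 = (B 0 1 ^ 2 + B 0 1) / 2 := by
    linear_combination (1 / 2 : ℂ) * (hyz₀ - α * h00 + B 0 1 * h12 - B 0 2 * h11
      + B 0 1 * h22 + α * B 2 2 * h11 + α * h22)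
  ext i j
  fin_cases i <;> fin_cases j <;> simp [autMat, h00, h10, h11, h12, h20, h21, h22, h02] <;> ring

lemma isDerMat_bracketA_iff (α : ℂ) (A : Matrix (Fin 3) (Fin 3) ℂ) :
    IsDerMat (bracketA α) A ↔ ∃ t, A = derMat t := by
  refine ⟨fun hA => ⟨A 0 2, eq_derMat_of_isDerMat hA⟩, ?_⟩
  rintro ⟨t, rfl⟩ u v
  ext i
  fin_cases i <;> simp [bracketA, derMat, mulVec, dotProduct, Fin.sum_univ_three] <;> ring

lemma isAutMat_bracketA_iff (α : ℂ) (B : Matrix (Fin 3) (Fin 3) ℂ) :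
    IsAutMat (bracketA α) B ↔ ∃ t, B = autMat t := by
  refine ⟨fun hB => ⟨B 0 1 / 2, eq_autMat_of_isAutMat hB⟩, ?_⟩
  rintro ⟨t, rfl⟩
  refine ⟨bijective_toLin'_of_isUnit (isUnit_autMat t), fun u v => ?_⟩
  ext i
  fin_cases i <;> simp [bracketA, autMat, mulVec, dotProduct, Fin.sum_univ_three] <;> ring

/-- The image of the derivation algebra of the ω-Lie algebra A_α (with
`[x,y] = x`, `[x,z] = x + y`, `[y,z] = z + α•x`) under the matrix exponential is exactly
the automorphism group of A_α: the exponential of every derivation is an automorphism,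
and every automorphism is the exponential of some derivation. -/
theorem exp_derivations_eq_automorphisms_A_alpha (α : ℂ)
    (b : V3 →ₗ[ℂ] V3 →ₗ[ℂ] V3)
    (hskew : ∀ u v : V3, b u v = - b v u)
    (hxy : b vx vy = vx) (hxz : b vx vz = vx + vy) (hyz : b vy vz = vz + α • vx) :
    (∀ A : Matrix (Fin 3) (Fin 3) ℂ, IsDerMat b A → IsAutMat b (NormedSpace.exp A)) ∧
    (∀ B : Matrix (Fin 3) (Fin 3) ℂ, IsAutMat b B →
      ∃ A : Matrix (Fin 3) (Fin 3) ℂ, IsDerMat b A ∧ NormedSpace.exp A = B) := by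
  obtain rfl := eq_bracketA α b hskew hxy hxz hyz
  refine ⟨fun A hA => ?_, fun B hB => ?_⟩
  · obtain ⟨t, rfl⟩ := (isDerMat_bracketA_iff α A).1 hA
    rw [exp_derMat]
    exact (isAutMat_bracketA_iff α _).2 ⟨t, rfl⟩
  · obtain ⟨t, rfl⟩ := (isAutMat_bracketA_iff α B).1 hB
    exact ⟨derMat t, (isDerMat_bracketA_iff α _).2 ⟨t, rfl⟩, exp_derMat t⟩
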